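/- arXiv:1409.5951 — 4 statements merged into one kernel-verified Lean document; each statement's English description precedes it below -/
import Mathlib

section
/- Let R = M_k(F) be the full matrix ring over a field F with k > 1, and let a ∈ R. If for all x, y, z, s ∈ R one has a[[z,x]_n, [s,y]_m]^t = 0 (with m, n, t > 0 fixed and t even), then a = 0. -/
/-- The iterated Engel commutator: `engel x y k = [x,y]_k` for `k ≥ 1`. -/
def engel {R : Type*} [NonUnitalNonAssocRing R] (x y : R) : ℕ → R
  | 0 => x
  | k + 1 => engel x y k * y - y * engel x y k

lemma engel_std {F : Type*} [Field F] {k : ℕ} (i j : Fin k) (hij : i ≠ j) :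
    ∀ p : ℕ, engel (Matrix.single i j (1 : F)) (Matrix.single j j 1) p
      = Matrix.single i j 1
  | 0 => rfl
  | p + 1 => by
    rw [engel, engel_std i j hij p, Matrix.single_mul_single_same,
      Matrix.single_mul_single_of_ne (h := Ne.symm hij)]
    simp

/-- Let `R = M_k(F)` with `F` a field of characteristic `≠ 2` and `k > 1`, and `a ∈ R`.
If `a * [[z,x]_n, [s,y]_m] ^ t = 0` for all `x, y, z, s ∈ R`, where `m, n, t > 0` are
fixed and `t` is even, then `a = 0`. -/
theorem stmt1 {F : Type*} [Field F] (h2 : (2 : F) ≠ 0) {k : ℕ} (hk : 1 < k)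
    (a : Matrix (Fin k) (Fin k) F)
    (m n t : ℕ) (hm : 0 < m) (hn : 0 < n) (ht : 0 < t) (hteven : Even t)
    (h : ∀ x y z s : Matrix (Fin k) (Fin k) F,
      a * (engel z x n * engel s y m - engel s y m * engel z x n) ^ t = 0) :
    a = 0 := by
  have key : ∀ i j : Fin k, i ≠ j →
      a * (Matrix.single i i 1 + Matrix.single j j (1 : F)) = 0 := by
    intro i j hij
    have hsp := h (Matrix.single j j 1) (Matrix.single i i 1)
      (Matrix.single i j 1) (Matrix.single j i 1)
    rw [engel_std i j hij, engel_std j i (Ne.symm hij)] at hsp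
    set E : Matrix (Fin k) (Fin k) F := Matrix.single i i 1 + Matrix.single j j 1
      with hE
    have hd : Matrix.single i j (1:F) * Matrix.single j i 1 -
        Matrix.single j i 1 * Matrix.single i j 1
        = Matrix.single i i 1 - Matrix.single j j 1 := by
      rw [Matrix.single_mul_single_same, Matrix.single_mul_single_same]; norm_num
    rw [hd] at hsp
    have hsq : (Matrix.single i i (1:F) - Matrix.single j j 1) ^ 2 = E := by
      rw [sq, Matrix.sub_mul, Matrix.mul_sub, Matrix.mul_sub,
        Matrix.single_mul_single_same, Matrix.single_mul_single_same,
        Matrix.single_mul_single_of_ne (h := hij), Matrix.single_mul_single_of_ne (h := Ne.symm hij)]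
      rw [hE]; noncomm_ring
    have hEsq : E * E = E := by
      rw [hE, Matrix.add_mul, Matrix.mul_add, Matrix.mul_add,
        Matrix.single_mul_single_same, Matrix.single_mul_single_same,
        Matrix.single_mul_single_of_ne (h := hij), Matrix.single_mul_single_of_ne (h := Ne.symm hij)]
      norm_num
    obtain ⟨q, rfl⟩ := hteven
    have hq : 0 < q := by omega
    have hpow : ∀ r : ℕ, 0 < r →
        (Matrix.single i i (1:F) - Matrix.single j j 1) ^ (r + r) = E := by
      intro r hr
      induction r with
      | zero => omega
      | succ r ih =>
        rcases Nat.eq_zero_or_pos r with hr0 | hr0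
        · subst hr0; simpa using hsq
        · have : r + 1 + (r + 1) = (r + r) + 2 := by omega
          rw [this, pow_add, ih hr0, hsq, hEsq]
    rw [hpow q hq] at hsp
    exact hsp
  ext p q
  have : Nontrivial (Fin k) := Fin.nontrivial_iff_two_le.mpr hk
  obtain ⟨j, hj⟩ := exists_ne q
  have := key q j (Ne.symm hj)
  have h0 := congrFun (congrFun this p) q
  rw [Matrix.mul_add] at h0
  rw [Matrix.add_apply, Matrix.mul_single_apply_same,
    Matrix.mul_single_apply_of_ne (hbj := Ne.symm hj)] at h0
  simpa using h0
end

section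
/- Let F be a field of characteristic ≠ 2, k ≥ 2, and i ≠ j indices. In M_k(F), the element [[e_{ij}, e_{ii}]_n, [e_{ji}, e_{ii}]_m]^t equals (-1)^{nt}(e_{ii} + (-1)^t e_{jj}) for all positive integers n, m, t; in particular when t is even it equals ±(e_{ii} + e_{jj}), which is invertible on the span of the i-th and j-th basis vectors. -/
lemma engel_neg {R : Type*} [Ring R] {x y : R} (hxy : x * y = 0) (hyx : y * x = x) :
    ∀ n : ℕ, engel x y n = ((-1 : ℤ) ^ n) • x
  | 0 => by simp [engel]
  | k + 1 => by
    rw [engel, engel_neg hxy hyx k, smul_mul_assoc, mul_smul_comm, hxy, hyx]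
    simp [pow_succ, mul_smul]

lemma engel_id {R : Type*} [Ring R] {x y : R} (hxy : x * y = x) (hyx : y * x = 0) :
    ∀ n : ℕ, engel x y n = x
  | 0 => rfl
  | k + 1 => by
    rw [engel, engel_id hxy hyx k, hxy, hyx, sub_zero]

lemma diag_pow {F : Type*} [Field F] {k : ℕ} (i j : Fin k) (hij : i ≠ j) :
    ∀ t : ℕ, 0 < t →
      (Matrix.single i i (1 : F) - Matrix.single j j (1 : F)) ^ t
        = Matrix.single i i (1 : F) + ((-1 : F) ^ t) • Matrix.single j j (1 : F)
  | 0, h => absurd h (by simp)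
  | 1, _ => by simp [sub_eq_add_neg]
  | (s + 2), _ => by
    rw [pow_succ, diag_pow i j hij (s + 1) (by omega)]
    simp [add_mul, mul_add, mul_sub, sub_mul, smul_mul_assoc, mul_smul_comm, hij, hij.symm,
      pow_succ, sub_eq_add_neg, mul_smul]

/-- Let `F` be a field with `char F ≠ 2`, `k ≥ 2`, `i ≠ j`. In `M_k(F)`,
`[[e_{ij}, e_{ii}]_n, [e_{ji}, e_{ii}]_m] ^ t = (-1)^{nt} (e_{ii} + (-1)^t e_{jj})`
for all positive `n, m, t`; in particular when `t` is even it equals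
`(-1)^{nt} (e_{ii} + e_{jj})`. -/
theorem stmt3 {F : Type*} [Field F] (h2 : (2 : F) ≠ 0) {k : ℕ} (hk : 2 ≤ k)
    (i j : Fin k) (hij : i ≠ j) (n m t : ℕ) (hn : 0 < n) (hm : 0 < m) (ht : 0 < t) :
    ((engel (Matrix.single i j (1 : F)) (Matrix.single i i (1 : F)) n *
        engel (Matrix.single j i (1 : F)) (Matrix.single i i (1 : F)) m -
      engel (Matrix.single j i (1 : F)) (Matrix.single i i (1 : F)) m *
        engel (Matrix.single i j (1 : F)) (Matrix.single i i (1 : F)) n) ^ t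
      = ((-1 : F) ^ (n * t)) •
          (Matrix.single i i (1 : F) +
            ((-1 : F) ^ t) • Matrix.single j j (1 : F)))
    ∧ (Even t →
      (engel (Matrix.single i j (1 : F)) (Matrix.single i i (1 : F)) n *
          engel (Matrix.single j i (1 : F)) (Matrix.single i i (1 : F)) m -
        engel (Matrix.single j i (1 : F)) (Matrix.single i i (1 : F)) m *
          engel (Matrix.single i j (1 : F)) (Matrix.single i i (1 : F)) n) ^ t
        = ((-1 : F) ^ (n * t)) •
            (Matrix.single i i (1 : F) + Matrix.single j j (1 : F))) := by
  have h1 : engel (Matrix.single i j (1 : F)) (Matrix.single i i (1 : F)) n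
      = ((-1 : ℤ) ^ n) • Matrix.single i j (1 : F) :=
    engel_neg (Matrix.single_mul_single_of_ne _ _ _ _ (Ne.symm hij) _)
      (by rw [Matrix.single_mul_single_same, one_mul]) n
  have h2' : engel (Matrix.single j i (1 : F)) (Matrix.single i i (1 : F)) m
      = Matrix.single j i (1 : F) :=
    engel_id (by rw [Matrix.single_mul_single_same, one_mul])
      (Matrix.single_mul_single_of_ne _ _ _ _ hij _) m
  have h1' : engel (Matrix.single i j (1 : F)) (Matrix.single i i (1 : F)) n
      = ((-1 : F) ^ n) • Matrix.single i j (1 : F) := by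
    rw [h1]
    have : (((-1 : ℤ) ^ n : ℤ) : F) = (-1 : F) ^ n := by push_cast; ring
    rw [← this, Int.cast_smul_eq_zsmul]
  have key : (engel (Matrix.single i j (1 : F)) (Matrix.single i i (1 : F)) n *
        engel (Matrix.single j i (1 : F)) (Matrix.single i i (1 : F)) m -
      engel (Matrix.single j i (1 : F)) (Matrix.single i i (1 : F)) m *
        engel (Matrix.single i j (1 : F)) (Matrix.single i i (1 : F)) n) ^ t
      = ((-1 : F) ^ (n * t)) •
          (Matrix.single i i (1 : F) + ((-1 : F) ^ t) •
            Matrix.single j j (1 : F)) := by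
    rw [h1', h2', smul_mul_assoc, mul_smul_comm, Matrix.single_mul_single_same,
      Matrix.single_mul_single_same, one_mul, ← smul_sub, smul_pow, ← pow_mul,
      diag_pow i j hij t ht]
  refine ⟨key, fun hev => ?_⟩
  rw [key, hev.neg_one_pow, one_smul]
end

section
/- In any ring R, for a derivation d and elements x,y ∈ R, if [[d(x),x],y] = 0 for all x, y ∈ R and R is prime of characteristic ≠ 2, and d ≠ 0, then R is commutative (Posner's theorem). -/
/-- Posner's theorem: let `R` be a prime ring of characteristic `≠ 2` and `d` a nonzero
derivation of `R` such that `[[d x, x], y] = 0` for all `x, y ∈ R`. Then `R` is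
commutative. -/
theorem stmt11 {R : Type*} [Ring R]
    (hprime : ∀ a b : R, (∀ x : R, a * x * b = 0) → a = 0 ∨ b = 0)
    (h2 : (2 : R) ≠ 0)
    (d : R → R)
    (hadd : ∀ x y : R, d (x + y) = d x + d y)
    (hleib : ∀ x y : R, d (x * y) = d x * y + x * d y)
    (hdne : ∃ x : R, d x ≠ 0)
    (h : ∀ x y : R, (d x * x - x * d x) * y - y * (d x * x - x * d x) = 0) :
    ∀ x y : R, x * y = y * x := by
  -- centrality of [d x, x], restated
  have hz : ∀ x y : R, (d x * x - x * d x) * y = y * (d x * x - x * d x) :=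
    fun x y => sub_eq_zero.mp (h x y)
  -- 2-torsion-freeness
  have tt : ∀ a : R, a + a = 0 → a = 0 := by
    intro a ha
    rcases hprime a 2 (fun x => by
      have hx : a * x * 2 = (a + a) * x := by noncomm_ring
      rw [hx, ha, zero_mul]) with h0 | h0
    · exact h0
    · exact absurd h0 h2
  -- key identity: [d x, x] * [x, y] = 0
  have key : ∀ x y : R, (d x * x - x * d x) * (x * y - y * x) = 0 := by
    intro x y
    refine tt _ (tt _ ?_)
    have e1 : d (x + x * x) = d x + (d x * x + x * d x) := by rw [hadd, hleib]
    have E1 := hz (x + x * x) y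
    rw [e1] at E1
    have E2 := hz (x * x) y
    rw [hleib] at E2
    have E3 := hz x y
    have H4 := hz x (x * y)
    have H5 := hz x (y * x)
    linear_combination (norm := noncomm_ring)
      E1 - E2 - E3 + 2 * H4 - 2 * (x * E3) - 2 * (E3 * x) - 2 * H5
  -- hence [d x, x] = 0 for all x
  have step1 : ∀ x : R, d x * x = x * d x := by
    intro x
    by_contra hne
    have hins : ∀ y r : R, (d x * x - x * d x) * r * (x * y - y * x) = 0 := by
      intro y r
      linear_combination (norm := noncomm_ring) key x (r * y) - key x r * y
    have hcomm : ∀ y : R, x * y = y * x := by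
      intro y
      rcases hprime (d x * x - x * d x) (x * y - y * x) (fun r => hins y r) with h0 | h0
      · exact absurd h0 (sub_ne_zero.mpr hne)
      · exact sub_eq_zero.mp h0
    exact hne (hcomm (d x)).symm
  -- linearized: [d x, y] + [d y, x] = 0
  have stepE : ∀ x y : R, d x * y + d y * x = y * d x + x * d y := by
    intro x y
    have E := step1 (x + y)
    rw [hadd] at E
    linear_combination (norm := noncomm_ring) E - step1 x - step1 y
  -- d x * [x, y] = 0
  have step3 : ∀ x y : R, d x * (x * y - y * x) = 0 := by
    intro x y
    have E := stepE x (x * y)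
    rw [hleib] at E
    linear_combination (norm := noncomm_ring)
      x * stepE x y + 2 * (step1 x * y) - E
  have step3' : ∀ x r y : R, d x * r * (x * y - y * x) = 0 := by
    intro x r y
    linear_combination (norm := noncomm_ring) step3 x (r * y) - step3 x r * y
  -- each x: d x = 0 or x central
  have step4 : ∀ x : R, d x = 0 ∨ ∀ y : R, x * y = y * x := by
    intro x
    by_cases hx : d x = 0
    · exact Or.inl hx
    · right
      intro y
      rcases hprime (d x) (x * y - y * x) (fun r => step3' x r y) with h0 | h0
      · exact absurd h0 hx
      · exact sub_eq_zero.mp h0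
  obtain ⟨x0, hx0⟩ := hdne
  have hx0c : ∀ y : R, x0 * y = y * x0 := (step4 x0).resolve_left hx0
  intro x y
  rcases step4 x with hx | hx
  · have h1 : ∀ z : R, (x + x0) * z = z * (x + x0) :=
      (step4 (x + x0)).resolve_left (by rw [hadd, hx, zero_add]; exact hx0)
    linear_combination (norm := noncomm_ring) h1 y - hx0c y
  · exact hx y
end

section
/- Let R be a semiprime ring, Q its Martindale quotient ring, B the Boolean algebra of idempotents of the extended centroid C, and M a maximal ideal of B. Then the ring R_M = O(R)/O(R)M is a prime ring, where O(R) is the orthogonal completion of R. -/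
/-- A ring is semiprime: `aRa = 0` implies `a = 0`. -/
def IsSemiprimeRing (R : Type*) [Ring R] : Prop :=
  ∀ a : R, (∀ x : R, a * x * a = 0) → a = 0

/-- `I` is a dense two-sided ideal of `R` (a two-sided ideal with zero two-sided
annihilator). -/
def IsDenseIdeal (R : Type*) [Ring R] (I : Set R) : Prop :=
  (0 : R) ∈ I ∧ (∀ a ∈ I, ∀ b ∈ I, a + b ∈ I) ∧ (∀ a ∈ I, -a ∈ I) ∧
    (∀ a ∈ I, ∀ r : R, r * a ∈ I ∧ a * r ∈ I) ∧
    (∀ r : R, (∀ a ∈ I, a * r = 0) → r = 0) ∧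
    (∀ r : R, (∀ a ∈ I, r * a = 0) → r = 0)

/-- `ι : R →+* Q` realizes `Q` as the two-sided Martindale quotient ring of `R`:
every element of `Q` is carried into `R` by a dense ideal of `R`, no nonzero element of
`Q` is annihilated by a dense ideal, and every compatible pair of left/right
multiplication-like maps on a dense ideal is realized by an element of `Q`. -/
structure IsMartindaleQuotient {R Q : Type*} [Ring R] [Ring Q] (ι : R →+* Q) : Prop where
  inj : Function.Injective ι
  carried : ∀ q : Q, ∃ I : Set R, IsDenseIdeal R I ∧
    ∀ a ∈ I, (∃ r : R, ι r = ι a * q) ∧ (∃ r : R, ι r = q * ι a)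
  nondeg : ∀ q : Q, ∀ I : Set R, IsDenseIdeal R I → (∀ a ∈ I, ι a * q = 0) → q = 0
  lifts : ∀ I : Set R, IsDenseIdeal R I → ∀ lam mu : R → R,
    (∀ a ∈ I, ∀ b ∈ I, lam (a + b) = lam a + lam b) →
    (∀ a ∈ I, ∀ b ∈ I, mu (a + b) = mu a + mu b) →
    (∀ a ∈ I, ∀ r : R, lam (a * r) = lam a * r) →
    (∀ a ∈ I, ∀ r : R, mu (r * a) = r * mu a) →
    (∀ a ∈ I, ∀ b ∈ I, a * lam b = mu a * b) →
    ∃ q : Q, ∀ a ∈ I, ι (lam a) = q * ι a ∧ ι (mu a) = ι a * q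

/-- The Boolean ring `B(C)` of idempotents of the extended centroid `C = Z(Q)`. -/
def BoolIdem (Q : Type*) [Ring Q] : Set Q :=
  {e : Q | e ∈ Subring.center Q ∧ e * e = e}

/-- A dense orthogonal subset of `B(C)`: pairwise orthogonal central idempotents with
zero annihilator in `Q`. -/
def DenseOrth (Q : Type*) [Ring Q] (E : Set Q) : Prop :=
  E ⊆ BoolIdem Q ∧ (∀ e ∈ E, ∀ f ∈ E, e ≠ f → e * f = 0) ∧
    (∀ q : Q, (∀ e ∈ E, e * q = 0) → q = 0)

/-- A subset `T ⊆ Q` is orthogonally complete if every family of elements of `T`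
indexed by a dense orthogonal set of idempotents has an "orthogonal sum" in `T`. -/
def OrthComplete (Q : Type*) [Ring Q] (T : Set Q) : Prop :=
  ∀ E : Set Q, DenseOrth Q E → ∀ x : Q → Q, (∀ e ∈ E, x e ∈ T) →
    ∃ s ∈ T, ∀ e ∈ E, e * s = e * x e

/-- The orthogonal completion `O(R)`: the intersection of all orthogonally complete
subsets of `Q` containing `R`. -/
def OrthCompletion {R Q : Type*} [Ring R] [Ring Q] (ι : R →+* Q) : Set Q :=
  ⋂₀ {T : Set Q | Set.range ι ⊆ T ∧ OrthComplete Q T}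

/-- The set `O(R)·M` of finite sums `∑ cᵢ eᵢ` with `cᵢ ∈ O(R)` and `eᵢ ∈ M`. -/
def OCIdeal {R Q : Type*} [Ring R] [Ring Q] (ι : R →+* Q) (M : Set Q) : Set Q :=
  {q : Q | ∃ (k : ℕ) (c : Fin k → Q) (e : Fin k → Q),
    (∀ i, c i ∈ OrthCompletion ι ∧ e i ∈ M) ∧ q = ∑ i, c i * e i}


section Aux
variable {R Q : Type*} [Ring R] [Ring Q]

namespace MartAux
set_option linter.unusedSectionVars false

variable (hsp : IsSemiprimeRing R) (ι : R →+* Q) (hQ : IsMartindaleQuotient ι)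
include hsp hQ

/-- Right-sided nondegeneracy. -/
lemma rnondeg (q : Q) (I : Set R) (hI : IsDenseIdeal R I)
    (h : ∀ a ∈ I, q * ι a = 0) : q = 0 := by
  obtain ⟨J, hJ, hcar⟩ := hQ.carried q
  apply hQ.nondeg q J hJ
  intro b hb
  obtain ⟨⟨r, hr⟩, -⟩ := hcar b hb
  have hr0 : r = 0 := by
    apply hI.2.2.2.2.2
    intro a ha
    apply hQ.inj
    rw [map_mul, hr, map_zero, mul_assoc, h a ha, mul_zero]
  rw [← hr, hr0, map_zero]

/-- `Q` is semiprime over `R`-points. -/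
lemma qsemiR (u : Q) (h : ∀ r : R, u * ι r * u = 0) : u = 0 := by
  obtain ⟨J, hJ, hcar⟩ := hQ.carried u
  apply hQ.nondeg u J hJ
  intro c hc
  obtain ⟨⟨m, hm⟩, -⟩ := hcar c hc
  have hm0 : m = 0 := by
    apply hsp
    intro s
    apply hQ.inj
    have : ι m * ι s * ι m = ι c * (u * ι (s * c) * u) := by
      rw [hm, map_mul]; simp only [mul_assoc]
    rw [map_mul, map_mul, this, h (s * c), mul_zero, map_zero]
  rw [← hm, hm0, map_zero]

/-- `Q` is semiprime. -/
lemma qsemi (u : Q) (h : ∀ q : Q, u * q * u = 0) : u = 0 :=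
  qsemiR hsp ι hQ u fun r => h (ι r)

lemma flipR (a b : Q) (h : ∀ r : R, a * ι r * b = 0) :
    ∀ r : R, b * ι r * a = 0 := by
  intro s
  apply qsemiR hsp ι hQ
  intro r
  have : b * ι s * a * ι r * (b * ι s * a) = b * ι s * (a * ι r * b) * ι s * a := by simp only [mul_assoc]
  rw [this, h r, mul_zero, zero_mul, zero_mul]

lemma midQ (a b : Q) (h : ∀ r : R, a * ι r * b = 0) : ∀ q : Q, a * q * b = 0 := by
  intro q
  apply qsemiR hsp ι hQ
  intro s
  have : a * q * b * ι s * (a * q * b) = a * q * (b * ι s * a) * q * b := by simp only [mul_assoc]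
  rw [this, flipR hsp ι hQ a b h s, mul_zero, zero_mul, zero_mul]

lemma flipQ (a q : Q) (h : ∀ v : Q, a * v * q = 0) : ∀ v : Q, q * v * a = 0 := by
  intro v
  apply qsemi hsp ι hQ
  intro w
  have : q * v * a * w * (q * v * a) = q * v * (a * w * q) * v * a := by simp only [mul_assoc]
  rw [this, h w, mul_zero, zero_mul, zero_mul]

end MartAux
end Aux

section OrthQ
variable {R Q : Type*} [Ring R] [Ring Q]

namespace MartAux
attribute [local instance] Classical.propDecidable
set_option linter.unusedSectionVars false
set_option linter.unusedVariables false

lemma lsum_mul {S α : Type*} [NonUnitalNonAssocSemiring S] (l : List α) (g : α → S) (t : S) :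
    (l.map fun p => g p * t).sum = (l.map g).sum * t := by
  induction l with
  | nil => simp
  | cons p l ih => simp [ih, add_mul]

lemma mul_lsum {S α : Type*} [NonUnitalNonAssocSemiring S] (l : List α) (g : α → S) (t : S) :
    (l.map fun p => t * g p).sum = t * (l.map g).sum := by
  induction l with
  | nil => simp
  | cons p l ih => simp [ih, mul_add]

lemma lsum_neg {S α : Type*} [Ring S] (l : List α) (g : α → S) :
    (l.map fun p => -(g p)).sum = -((l.map g).sum) := by
  induction l with
  | nil => simp
  | cons p l ih => simp [ih, neg_add, add_comm]

lemma absorb1 {e u : Q} (hc : ∀ w : Q, e * w = w * e) (hi : e * e = e) :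
    u * e = e * (u * e) := by
  rw [hc (u * e), mul_assoc, hi]

lemma absorb2 {e u v : Q} (hc : ∀ w : Q, e * w = w * e) (hi : e * e = e) :
    (u * e) * v = e * ((u * e) * v) := by
  rw [hc ((u * e) * v), mul_assoc (u * e), ← hc v, ← mul_assoc (u * e), mul_assoc u e e, hi]

variable (ι : R →+* Q) (hQ : IsMartindaleQuotient ι)

/-- A chosen carrier ideal for `q`. -/
noncomputable def carr (q : Q) : Set R := (hQ.carried q).choose

lemma carr_dense (q : Q) : IsDenseIdeal R (carr ι hQ q) :=
  (hQ.carried q).choose_spec.1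

lemma carr_spec (q : Q) : ∀ a ∈ carr ι hQ q,
    (∃ r : R, ι r = ι a * q) ∧ (∃ r : R, ι r = q * ι a) :=
  (hQ.carried q).choose_spec.2

variable (x : Q → Q)

/-- The `e`-component candidates. -/
def Dset (e : Q) : Set R := {r | r ∈ carr ι hQ (e * x e) ∧ ι r = e * ι r}

variable (E : Set Q)

def Jset : Set R :=
  {r | ∃ l : List (Q × R), (∀ p ∈ l, p.1 ∈ E ∧ p.2 ∈ Dset ι hQ x p.1) ∧
    r = (l.map Prod.snd).sum}

noncomputable def svalL (l : List (Q × R)) : Q :=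
  (l.map fun p => (p.1 * x p.1) * ι p.2).sum

noncomputable def tvalL (l : List (Q × R)) : Q :=
  (l.map fun p => ι p.2 * (p.1 * x p.1)).sum

noncomputable def lamF : R → R := fun r =>
  if h : ∃ p : (List (Q × R)) × R,
      (∀ q ∈ p.1, q.1 ∈ E ∧ q.2 ∈ Dset ι hQ x q.1) ∧
      r = ((p.1.map Prod.snd).sum) ∧ ι p.2 = svalL ι x p.1 then
    h.choose.2 else 0

noncomputable def muF : R → R := fun r =>
  if h : ∃ p : (List (Q × R)) × R,
      (∀ q ∈ p.1, q.1 ∈ E ∧ q.2 ∈ Dset ι hQ x q.1) ∧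
      r = ((p.1.map Prod.snd).sum) ∧ ι p.2 = tvalL ι x p.1 then
    h.choose.2 else 0

variable (hE : DenseOrth Q E)

section lemmas
include hE

lemma Ecomm : ∀ e ∈ E, ∀ w : Q, e * w = w * e := by
  intro e he w
  exact (Subring.mem_center_iff.mp (hE.1 he).1 w).symm

lemma Eidem : ∀ e ∈ E, e * e = e := fun e he => (hE.1 he).2

lemma sv_exists (l : List (Q × R))
    (hval : ∀ p ∈ l, p.1 ∈ E ∧ p.2 ∈ Dset ι hQ x p.1) :
    ∃ u : R, ι u = svalL ι x l := by
  induction l with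
  | nil => exact ⟨0, by simp [svalL]⟩
  | cons p l ih =>
    obtain ⟨u, hu⟩ := ih (fun q hq => hval q (List.mem_cons_of_mem p hq))
    obtain ⟨-, hp2, -⟩ := hval p List.mem_cons_self
    obtain ⟨-, ⟨v, hv⟩⟩ := carr_spec ι hQ (p.1 * x p.1) p.2 hp2
    exact ⟨v + u, by simp [svalL, map_add, hu, hv]⟩

lemma tv_exists (l : List (Q × R))
    (hval : ∀ p ∈ l, p.1 ∈ E ∧ p.2 ∈ Dset ι hQ x p.1) :
    ∃ u : R, ι u = tvalL ι x l := by
  induction l with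
  | nil => exact ⟨0, by simp [tvalL]⟩
  | cons p l ih =>
    obtain ⟨u, hu⟩ := ih (fun q hq => hval q (List.mem_cons_of_mem p hq))
    obtain ⟨-, hp2, -⟩ := hval p List.mem_cons_self
    obtain ⟨⟨v, hv⟩, -⟩ := carr_spec ι hQ (p.1 * x p.1) p.2 hp2
    exact ⟨v + u, by simp [tvalL, map_add, hu, hv]⟩

lemma keyS (l : List (Q × R))
    (hval : ∀ p ∈ l, p.1 ∈ E ∧ p.2 ∈ Dset ι hQ x p.1) :
    ∀ f ∈ E, f * svalL ι x l = (f * x f) * (f * ι ((l.map Prod.snd).sum)) := by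
  intro f hf
  induction l with
  | nil => simp [svalL]
  | cons p l ih =>
    have ihl := ih (fun q hq => hval q (List.mem_cons_of_mem p hq))
    obtain ⟨hp1, -, hpe⟩ := hval p List.mem_cons_self
    have hterm : f * ((p.1 * x p.1) * ι p.2) = (f * x f) * (f * ι p.2) := by
      by_cases hpf : p.1 = f
      · subst hpf
        have h2 : p.1 * ι p.2 = ι p.2 := hpe.symm
        rw [h2, ← mul_assoc, ← mul_assoc, Eidem E hE p.1 hp1]
      · have h0 : f * p.1 = 0 := hE.2.1 f hf p.1 hp1 (fun h => hpf h.symm)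
        have h2 : f * ι p.2 = 0 := by
          rw [hpe, ← mul_assoc, h0, zero_mul]
        rw [h2, mul_zero, ← mul_assoc, ← mul_assoc, h0, zero_mul, zero_mul]
    simp only [svalL, List.map_cons, List.sum_cons, map_add, mul_add] at *
    rw [hterm, ihl]

lemma keyT (l : List (Q × R))
    (hval : ∀ p ∈ l, p.1 ∈ E ∧ p.2 ∈ Dset ι hQ x p.1) :
    ∀ f ∈ E, f * tvalL ι x l = (f * ι ((l.map Prod.snd).sum)) * (f * x f) := by
  intro f hf
  induction l with
  | nil => simp [tvalL]
  | cons p l ih =>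
    have ihl := ih (fun q hq => hval q (List.mem_cons_of_mem p hq))
    obtain ⟨hp1, -, hpe⟩ := hval p List.mem_cons_self
    have hterm : f * (ι p.2 * (p.1 * x p.1)) = (f * ι p.2) * (f * x f) := by
      by_cases hpf : p.1 = f
      · subst hpf
        rw [← mul_assoc]
      · have h2 : f * ι p.2 = 0 := by
          rw [hpe, ← mul_assoc, hE.2.1 f hf p.1 hp1 (fun h => hpf h.symm), zero_mul]
        rw [← mul_assoc, h2, zero_mul, zero_mul]
    simp only [tvalL, List.map_cons, List.sum_cons, map_add, mul_add, add_mul] at *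
    rw [hterm, ihl]

lemma sval_indep (l l' : List (Q × R))
    (hval : ∀ p ∈ l, p.1 ∈ E ∧ p.2 ∈ Dset ι hQ x p.1)
    (hval' : ∀ p ∈ l', p.1 ∈ E ∧ p.2 ∈ Dset ι hQ x p.1)
    (hsum : (l.map Prod.snd).sum = (l'.map Prod.snd).sum) :
    svalL ι x l = svalL ι x l' := by
  have h0 : svalL ι x l - svalL ι x l' = 0 := by
    apply hE.2.2
    intro f hf
    rw [mul_sub, keyS ι hQ x E hE l hval f hf, keyS ι hQ x E hE l' hval' f hf, hsum,
      sub_self]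
  exact sub_eq_zero.mp h0

lemma tval_indep (l l' : List (Q × R))
    (hval : ∀ p ∈ l, p.1 ∈ E ∧ p.2 ∈ Dset ι hQ x p.1)
    (hval' : ∀ p ∈ l', p.1 ∈ E ∧ p.2 ∈ Dset ι hQ x p.1)
    (hsum : (l.map Prod.snd).sum = (l'.map Prod.snd).sum) :
    tvalL ι x l = tvalL ι x l' := by
  have h0 : tvalL ι x l - tvalL ι x l' = 0 := by
    apply hE.2.2
    intro f hf
    rw [mul_sub, keyT ι hQ x E hE l hval f hf, keyT ι hQ x E hE l' hval' f hf, hsum,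
      sub_self]
  exact sub_eq_zero.mp h0

lemma lam_spec (l : List (Q × R))
    (hval : ∀ p ∈ l, p.1 ∈ E ∧ p.2 ∈ Dset ι hQ x p.1) :
    ι (lamF ι hQ x E ((l.map Prod.snd).sum)) = svalL ι x l := by
  obtain ⟨u, hu⟩ := sv_exists ι hQ x E hE l hval
  have h : ∃ p : (List (Q × R)) × R,
      (∀ q ∈ p.1, q.1 ∈ E ∧ q.2 ∈ Dset ι hQ x q.1) ∧
      (l.map Prod.snd).sum = ((p.1.map Prod.snd).sum) ∧ ι p.2 = svalL ι x p.1 :=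
    ⟨⟨l, u⟩, hval, rfl, hu⟩
  rw [lamF, dif_pos h]
  obtain ⟨h1, h2, h3⟩ := h.choose_spec
  rw [h3]
  exact sval_indep ι hQ x E hE _ l h1 hval h2.symm

lemma mu_spec (l : List (Q × R))
    (hval : ∀ p ∈ l, p.1 ∈ E ∧ p.2 ∈ Dset ι hQ x p.1) :
    ι (muF ι hQ x E ((l.map Prod.snd).sum)) = tvalL ι x l := by
  obtain ⟨u, hu⟩ := tv_exists ι hQ x E hE l hval
  have h : ∃ p : (List (Q × R)) × R,
      (∀ q ∈ p.1, q.1 ∈ E ∧ q.2 ∈ Dset ι hQ x q.1) ∧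
      (l.map Prod.snd).sum = ((p.1.map Prod.snd).sum) ∧ ι p.2 = tvalL ι x p.1 :=
    ⟨⟨l, u⟩, hval, rfl, hu⟩
  rw [muF, dif_pos h]
  obtain ⟨h1, h2, h3⟩ := h.choose_spec
  rw [h3]
  exact tval_indep ι hQ x E hE _ l h1 hval h2.symm

end lemmas

end MartAux
end OrthQ

section OrthQ2
variable {R Q : Type*} [Ring R] [Ring Q]

namespace MartAux
set_option linter.unusedSectionVars false
set_option linter.unusedVariables false

variable (hsp : IsSemiprimeRing R) (ι : R →+* Q) (hQ : IsMartindaleQuotient ι)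
variable (x : Q → Q) (E : Set Q) (hE : DenseOrth Q E)

include hE

lemma Jset_valid_mul_right {l : List (Q × R)}
    (hval : ∀ p ∈ l, p.1 ∈ E ∧ p.2 ∈ Dset ι hQ x p.1) (t : R) :
    ∀ p ∈ l.map (fun p : Q × R => (p.1, p.2 * t)),
      p.1 ∈ E ∧ p.2 ∈ Dset ι hQ x p.1 := by
  intro p hp
  obtain ⟨q, hq, rfl⟩ := List.mem_map.mp hp
  obtain ⟨h1, h2, h3⟩ := hval q hq
  refine ⟨h1, ((carr_dense ι hQ _).2.2.2.1 q.2 h2 t).2, ?_⟩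
  show ι (q.2 * t) = q.1 * ι (q.2 * t)
  rw [map_mul]
  nth_rewrite 1 [h3]
  rw [mul_assoc]

lemma Jset_valid_mul_left {l : List (Q × R)}
    (hval : ∀ p ∈ l, p.1 ∈ E ∧ p.2 ∈ Dset ι hQ x p.1) (t : R) :
    ∀ p ∈ l.map (fun p : Q × R => (p.1, t * p.2)),
      p.1 ∈ E ∧ p.2 ∈ Dset ι hQ x p.1 := by
  intro p hp
  obtain ⟨q, hq, rfl⟩ := List.mem_map.mp hp
  obtain ⟨h1, h2, h3⟩ := hval q hq
  refine ⟨h1, ((carr_dense ι hQ _).2.2.2.1 q.2 h2 t).1, ?_⟩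
  have hc := Ecomm E hE q.1 h1
  show ι (t * q.2) = q.1 * ι (t * q.2)
  rw [map_mul]
  nth_rewrite 1 [h3]
  rw [← mul_assoc, ← hc (ι t), mul_assoc]

include hsp hQ

lemma Jset_dense : IsDenseIdeal R (Jset ι hQ x E) := by
  refine ⟨⟨[], by simp, by simp⟩, ?_, ?_, ?_, ?_, ?_⟩
  · rintro a ⟨la, hva, rfl⟩ b ⟨lb, hvb, rfl⟩
    refine ⟨la ++ lb, ?_, by simp⟩
    intro p hp
    rcases List.mem_append.mp hp with h | h
    exacts [hva p h, hvb p h]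
  · rintro a ⟨la, hva, rfl⟩
    refine ⟨la.map (fun p : Q × R => (p.1, -p.2)), ?_, ?_⟩
    · intro p hp
      obtain ⟨q, hq, rfl⟩ := List.mem_map.mp hp
      obtain ⟨h1, h2, h3⟩ := hva q hq
      refine ⟨h1, (carr_dense ι hQ _).2.2.1 q.2 h2, ?_⟩
      show ι (-q.2) = q.1 * ι (-q.2)
      rw [map_neg]
      nth_rewrite 1 [h3]
      rw [mul_neg]
    · rw [List.map_map]
      have : (Prod.snd ∘ fun p : Q × R => (p.1, -p.2)) = fun p : Q × R => -(p.2) := rfl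
      rw [this, lsum_neg la Prod.snd]
  · rintro a ⟨la, hva, rfl⟩ t
    constructor
    · refine ⟨la.map (fun p : Q × R => (p.1, t * p.2)), Jset_valid_mul_left ι hQ x E hE hva t, ?_⟩
      rw [List.map_map]
      have : (Prod.snd ∘ fun p : Q × R => (p.1, t * p.2)) = fun p : Q × R => t * p.2 := rfl
      rw [this, mul_lsum la Prod.snd]
    · refine ⟨la.map (fun p : Q × R => (p.1, p.2 * t)), Jset_valid_mul_right ι hQ x E hE hva t, ?_⟩
      rw [List.map_map]
      have : (Prod.snd ∘ fun p : Q × R => (p.1, p.2 * t)) = fun p : Q × R => p.2 * t := rfl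
      rw [this, lsum_mul la Prod.snd]
  · -- (∀ a ∈ J, a * t = 0) → t = 0
    intro t ht
    have h0 : ι t = 0 := by
      apply hE.2.2
      intro e he
      -- elements b * u' with b ∈ carr (e*xe) =: Ie, u' with ι u' = ι u * e
      have key : ∀ u ∈ carr ι hQ e, ι u * (e * ι t) = 0 := by
        intro u hu
        obtain ⟨⟨u', hu'⟩, -⟩ := carr_spec ι hQ e u hu
        have h1 : ι u' * ι t = 0 := by
          apply hQ.nondeg _ _ (carr_dense ι hQ (e * x e))
          intro b hb
          have hmem : b * u' ∈ Jset ι hQ x E := by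
            refine ⟨[(e, b * u')], ?_, by simp⟩
            rintro p hp
            simp only [List.mem_singleton] at hp
            subst hp
            refine ⟨he, ((carr_dense ι hQ _).2.2.2.1 b hb u').2, ?_⟩
            have hc := Ecomm E hE e he
            rw [map_mul, hu', ← mul_assoc]
            exact absorb1 hc (Eidem E hE e he)
          have := ht _ hmem
          have : ι (b * u' * t) = 0 := by rw [this, map_zero]
          rw [map_mul, map_mul, mul_assoc] at this
          exact this
        rw [hu', mul_assoc] at h1
        exact h1
      have := hQ.nondeg (e * ι t) _ (carr_dense ι hQ e) key
      exact this
    exact hQ.inj (by rw [h0, map_zero])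
  · -- (∀ a ∈ J, t * a = 0) → t = 0
    intro t ht
    have h0 : ι t = 0 := by
      apply hE.2.2
      intro e he
      have key : ∀ u ∈ carr ι hQ e, (ι t * e) * ι u = 0 := by
        intro u hu
        obtain ⟨⟨u', hu'⟩, -⟩ := carr_spec ι hQ e u hu
        have h1 : ι t * ι u' = 0 := by
          apply rnondeg hsp ι hQ _ _ (carr_dense ι hQ (e * x e))
          intro b hb
          have hmem : u' * b ∈ Jset ι hQ x E := by
            refine ⟨[(e, u' * b)], ?_, by simp⟩
            rintro p hp
            simp only [List.mem_singleton] at hp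
            subst hp
            refine ⟨he, ((carr_dense ι hQ _).2.2.2.1 b hb u').1, ?_⟩
            have hc := Ecomm E hE e he
            rw [map_mul, hu']
            exact absorb2 hc (Eidem E hE e he)
          have := ht _ hmem
          have : ι (t * (u' * b)) = 0 := by rw [this, map_zero]
          rw [map_mul, map_mul, ← mul_assoc] at this
          exact this
        rw [hu'] at h1
        rw [mul_assoc, Ecomm E hE e he (ι u)]
        exact h1
      have h2 : ι t * e = 0 := rnondeg hsp ι hQ _ _ (carr_dense ι hQ e) key
      rw [Ecomm E hE e he (ι t)]
      exact h2
    exact hQ.inj (by rw [h0, map_zero])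

lemma Qorth : ∃ s : Q, ∀ e ∈ E, e * s = e * x e := by
  have hJ := Jset_dense hsp ι hQ x E hE
  have hA1 : ∀ a ∈ Jset ι hQ x E, ∀ b ∈ Jset ι hQ x E, lamF ι hQ x E (a + b) = lamF ι hQ x E a + lamF ι hQ x E b := by
    -- lam additive
      rintro a ⟨la, hva, rfl⟩ b ⟨lb, hvb, rfl⟩
      apply hQ.inj
      have hvab : ∀ p ∈ la ++ lb, p.1 ∈ E ∧ p.2 ∈ Dset ι hQ x p.1 := by
        intro p hp
        rcases List.mem_append.mp hp with h | h
        exacts [hva p h, hvb p h]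
      have h1 : (la.map Prod.snd).sum + (lb.map Prod.snd).sum
          = ((la ++ lb).map Prod.snd).sum := by simp
      rw [map_add, lam_spec ι hQ x E hE la hva, lam_spec ι hQ x E hE lb hvb, h1,
        lam_spec ι hQ x E hE (la ++ lb) hvab]
      simp [svalL]
  have hA2 : ∀ a ∈ Jset ι hQ x E, ∀ b ∈ Jset ι hQ x E, muF ι hQ x E (a + b) = muF ι hQ x E a + muF ι hQ x E b := by
    -- mu additive
      rintro a ⟨la, hva, rfl⟩ b ⟨lb, hvb, rfl⟩
      apply hQ.inj
      have hvab : ∀ p ∈ la ++ lb, p.1 ∈ E ∧ p.2 ∈ Dset ι hQ x p.1 := by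
        intro p hp
        rcases List.mem_append.mp hp with h | h
        exacts [hva p h, hvb p h]
      have h1 : (la.map Prod.snd).sum + (lb.map Prod.snd).sum
          = ((la ++ lb).map Prod.snd).sum := by simp
      rw [map_add, mu_spec ι hQ x E hE la hva, mu_spec ι hQ x E hE lb hvb, h1,
        mu_spec ι hQ x E hE (la ++ lb) hvab]
      simp [tvalL]
  have hM1 : ∀ a ∈ Jset ι hQ x E, ∀ r : R, lamF ι hQ x E (a * r) = lamF ι hQ x E a * r := by
    -- lam (a * t) = lam a * t
      rintro a ⟨la, hva, rfl⟩ t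
      apply hQ.inj
      have hv' := Jset_valid_mul_right ι hQ x E hE hva t
      have h1 : (la.map Prod.snd).sum * t
          = ((la.map (fun p : Q × R => (p.1, p.2 * t))).map Prod.snd).sum := by
        rw [List.map_map]
        have : (Prod.snd ∘ fun p : Q × R => (p.1, p.2 * t)) = fun p : Q × R => p.2 * t := rfl
        rw [this, lsum_mul la Prod.snd]
      rw [map_mul, lam_spec ι hQ x E hE la hva, h1, lam_spec ι hQ x E hE _ hv']
      simp only [svalL, List.map_map]
      have : ((fun p : Q × R => (p.1 * x p.1) * ι p.2) ∘ fun p : Q × R => (p.1, p.2 * t))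
          = fun p : Q × R => ((p.1 * x p.1) * ι p.2) * ι t := by
        funext p
        simp [map_mul, mul_assoc]
      rw [this, lsum_mul la _ (ι t)]
  have hM2 : ∀ a ∈ Jset ι hQ x E, ∀ r : R, muF ι hQ x E (r * a) = r * muF ι hQ x E a := by
    -- mu (t * a) = t * mu a
      rintro a ⟨la, hva, rfl⟩ t
      apply hQ.inj
      have hv' := Jset_valid_mul_left ι hQ x E hE hva t
      have h1 : t * (la.map Prod.snd).sum
          = ((la.map (fun p : Q × R => (p.1, t * p.2))).map Prod.snd).sum := by
        rw [List.map_map]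
        have : (Prod.snd ∘ fun p : Q × R => (p.1, t * p.2)) = fun p : Q × R => t * p.2 := rfl
        rw [this, mul_lsum la Prod.snd]
      rw [map_mul, mu_spec ι hQ x E hE la hva, h1, mu_spec ι hQ x E hE _ hv']
      simp only [tvalL, List.map_map]
      have : ((fun p : Q × R => ι p.2 * (p.1 * x p.1)) ∘ fun p : Q × R => (p.1, t * p.2))
          = fun p : Q × R => ι t * (ι p.2 * (p.1 * x p.1)) := by
        funext p
        simp [map_mul, mul_assoc]
      rw [this, mul_lsum la _ (ι t)]
  have hCP : ∀ a ∈ Jset ι hQ x E, ∀ b ∈ Jset ι hQ x E, a * lamF ι hQ x E b = muF ι hQ x E a * b := by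
    -- compat
      rintro a ⟨la, hva, rfl⟩ b ⟨lb, hvb, rfl⟩
      apply hQ.inj
      rw [map_mul, map_mul, lam_spec ι hQ x E hE lb hvb, mu_spec ι hQ x E hE la hva]
      have hkey : ι ((la.map Prod.snd).sum) * svalL ι x lb
          - tvalL ι x la * ι ((lb.map Prod.snd).sum) = 0 := by
        apply hE.2.2
        intro f hf
        have hc := Ecomm E hE f hf
        have e1 : f * (ι ((la.map Prod.snd).sum) * svalL ι x lb)
            = ι ((la.map Prod.snd).sum) * ((f * x f) * (f * ι ((lb.map Prod.snd).sum))) := by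
          rw [← mul_assoc, hc (ι ((la.map Prod.snd).sum)), mul_assoc,
            keyS ι hQ x E hE lb hvb f hf]
        have e2 : f * (tvalL ι x la * ι ((lb.map Prod.snd).sum))
            = ((f * ι ((la.map Prod.snd).sum)) * (f * x f)) * ι ((lb.map Prod.snd).sum) := by
          rw [← mul_assoc, keyT ι hQ x E hE la hva f hf]
        have e3 : ι ((la.map Prod.snd).sum) * ((f * x f) * (f * ι ((lb.map Prod.snd).sum)))
            = ((f * ι ((la.map Prod.snd).sum)) * (f * x f)) * ι ((lb.map Prod.snd).sum) := by
          rw [hc (ι ((la.map Prod.snd).sum))]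
          simp only [mul_assoc]
          rw [← mul_assoc (x f) f, ← hc (x f), mul_assoc]
        rw [mul_sub, e1, e2, e3, sub_self]
      have := sub_eq_zero.mp hkey
      rw [this]
  obtain ⟨s, hs⟩ := hQ.lifts (Jset ι hQ x E) hJ (lamF ι hQ x E) (muF ι hQ x E) hA1 hA2 hM1 hM2 hCP
  refine ⟨s, ?_⟩
  intro e he
  have hse : s * e = (e * x e) * e := by
    have key : ∀ u ∈ carr ι hQ e, (s * e - (e * x e) * e) * ι u = 0 := by
      intro u hu
      obtain ⟨⟨u', hu'⟩, -⟩ := carr_spec ι hQ e u hu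
      have h1 : (s - e * x e) * ι u' = 0 := by
        apply rnondeg hsp ι hQ _ _ (carr_dense ι hQ (e * x e))
        intro b hb
        have hmemD : u' * b ∈ Dset ι hQ x e := by
          refine ⟨((carr_dense ι hQ _).2.2.2.1 b hb u').1, ?_⟩
          have hc := Ecomm E hE e he
          rw [map_mul, hu']
          exact absorb2 hc (Eidem E hE e he)
        have hval : ∀ p ∈ [(e, u' * b)], p.1 ∈ E ∧ p.2 ∈ Dset ι hQ x p.1 := by
          rintro p hp
          simp only [List.mem_singleton] at hp
          subst hp
          exact ⟨he, hmemD⟩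
        have hmem : u' * b ∈ Jset ι hQ x E := ⟨[(e, u' * b)], hval, by simp⟩
        have h2 := (hs _ hmem).1
        have h3 : ι (lamF ι hQ x E (u' * b)) = (e * x e) * ι (u' * b) := by
          have h4 := lam_spec ι hQ x E hE [(e, u' * b)] hval
          simp only [List.map_cons, List.map_nil, List.sum_cons, List.sum_nil,
            add_zero, svalL] at h4
          simpa using h4
        rw [h3] at h2
        have hstep : s * ι u' * ι b = e * x e * ι u' * ι b := by
          calc s * ι u' * ι b = s * ι (u' * b) := by simp only [map_mul, mul_assoc]
          _ = e * x e * ι (u' * b) := h2.symm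
          _ = e * x e * ι u' * ι b := by simp only [map_mul, mul_assoc]
        have hd : (s * ι u' - e * x e * ι u') * ι b
            = s * ι u' * ι b - e * x e * ι u' * ι b := sub_mul _ _ _
        rw [sub_mul s (e * x e) (ι u'), hd, hstep, sub_self]
      have h2 : (s - e * x e) * (ι u * e) = 0 := by rw [← hu']; exact h1
      have h3 : (s * e - e * x e * e) * ι u = (s - e * x e) * (ι u * e) := by
        rw [sub_mul, sub_mul, ← Ecomm E hE e he (ι u)]
        simp only [mul_assoc]
      rw [h3, h2]
    have := rnondeg hsp ι hQ _ _ (carr_dense ι hQ e) key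
    exact sub_eq_zero.mp this
  have hc := Ecomm E hE e he
  rw [hc s, hse]
  rw [mul_assoc, ← hc (x e), ← mul_assoc, Eidem E hE e he]

end MartAux
end OrthQ2

section Supp
variable {R Q : Type*} [Ring R] [Ring Q]

namespace MartAux
set_option linter.unusedSectionVars false
set_option linter.unusedVariables false
attribute [local instance] Classical.propDecidable

variable (ι : R →+* Q) (a : Q)

/-- The two-sided ideal of `Q` generated by `a`. -/
def IdS : Set Q := {q | ∃ l : List (Q × Q), q = (l.map fun p => p.1 * a * p.2).sum}

/-- The two-sided annihilator of that ideal. -/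
def AnnS : Set Q := {q | ∀ v : Q, a * v * q = 0}

omit [Ring R] in
lemma a_mem_IdS : a ∈ IdS a := ⟨[(1, 1)], by simp⟩

omit [Ring R] in
lemma IdS_zero : (0 : Q) ∈ IdS a := ⟨[], by simp⟩

omit [Ring R] in
lemma IdS_add {q q' : Q} (h : q ∈ IdS a) (h' : q' ∈ IdS a) : q + q' ∈ IdS a := by
  obtain ⟨l, rfl⟩ := h; obtain ⟨l', rfl⟩ := h'
  exact ⟨l ++ l', by simp⟩

omit [Ring R] in
lemma IdS_neg {q : Q} (h : q ∈ IdS a) : -q ∈ IdS a := by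
  obtain ⟨l, rfl⟩ := h
  refine ⟨l.map fun p => (-p.1, p.2), ?_⟩
  rw [List.map_map]
  have : ((fun p : Q × Q => p.1 * a * p.2) ∘ fun p : Q × Q => (-p.1, p.2))
      = fun p : Q × Q => -(p.1 * a * p.2) := by
    funext p; simp
  rw [this, lsum_neg]

omit [Ring R] in
lemma IdS_sub {q q' : Q} (h : q ∈ IdS a) (h' : q' ∈ IdS a) : q - q' ∈ IdS a := by
  rw [sub_eq_add_neg]; exact IdS_add a h (IdS_neg a h')

omit [Ring R] in
lemma IdS_mul_left {q : Q} (h : q ∈ IdS a) (t : Q) : t * q ∈ IdS a := by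
  obtain ⟨l, rfl⟩ := h
  refine ⟨l.map fun p => (t * p.1, p.2), ?_⟩
  rw [List.map_map]
  have : ((fun p : Q × Q => p.1 * a * p.2) ∘ fun p : Q × Q => (t * p.1, p.2))
      = fun p : Q × Q => t * (p.1 * a * p.2) := by
    funext p; simp [mul_assoc]
  rw [this, mul_lsum]

omit [Ring R] in
lemma IdS_mul_right {q : Q} (h : q ∈ IdS a) (t : Q) : q * t ∈ IdS a := by
  obtain ⟨l, rfl⟩ := h
  refine ⟨l.map fun p => (p.1, p.2 * t), ?_⟩
  rw [List.map_map]
  have : ((fun p : Q × Q => p.1 * a * p.2) ∘ fun p : Q × Q => (p.1, p.2 * t))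
      = fun p : Q × Q => (p.1 * a * p.2) * t := by
    funext p; simp [mul_assoc]
  rw [this, lsum_mul]

omit [Ring R] in
lemma AnnS_zero : (0 : Q) ∈ AnnS a := fun v => by simp

omit [Ring R] in
lemma AnnS_add {q q' : Q} (h : q ∈ AnnS a) (h' : q' ∈ AnnS a) : q + q' ∈ AnnS a :=
  fun v => by rw [mul_add, h v, h' v, add_zero]

omit [Ring R] in
lemma AnnS_neg {q : Q} (h : q ∈ AnnS a) : -q ∈ AnnS a :=
  fun v => by rw [mul_neg, h v, neg_zero]

omit [Ring R] in
lemma AnnS_sub {q q' : Q} (h : q ∈ AnnS a) (h' : q' ∈ AnnS a) : q - q' ∈ AnnS a := by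
  rw [sub_eq_add_neg]; exact AnnS_add a h (AnnS_neg a h')

omit [Ring R] in
lemma AnnS_mul_left {q : Q} (h : q ∈ AnnS a) (t : Q) : t * q ∈ AnnS a := by
  intro v
  have : a * v * (t * q) = a * (v * t) * q := by simp [mul_assoc]
  rw [this, h (v * t)]

omit [Ring R] in
lemma AnnS_mul_right {q : Q} (h : q ∈ AnnS a) (t : Q) : q * t ∈ AnnS a := by
  intro v
  rw [← mul_assoc, h v, zero_mul]

variable (hsp : IsSemiprimeRing R) (hQ : IsMartindaleQuotient ι)
include hsp hQ

lemma AnnS_flip {q : Q} (h : q ∈ AnnS a) : ∀ v : Q, q * v * a = 0 :=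
  flipQ hsp ι hQ a q h

lemma AnnS_of_flip {q : Q} (h : ∀ v : Q, q * v * a = 0) : q ∈ AnnS a :=
  flipQ hsp ι hQ q a h

omit hsp hQ in
lemma Id_mul_Ann {q w : Q} (hq : q ∈ IdS a) (hw : w ∈ AnnS a) : q * w = 0 := by
  obtain ⟨l, rfl⟩ := hq
  rw [← lsum_mul]
  apply List.sum_eq_zero
  intro z hz
  obtain ⟨p, hp, rfl⟩ := List.mem_map.mp hz
  show p.1 * a * p.2 * w = 0
  rw [mul_assoc, mul_assoc, ← mul_assoc a, hw p.2, mul_zero]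

lemma Ann_mul_Id {q w : Q} (hw : w ∈ AnnS a) (hq : q ∈ IdS a) : w * q = 0 := by
  obtain ⟨l, rfl⟩ := hq
  rw [← mul_lsum]
  apply List.sum_eq_zero
  intro z hz
  obtain ⟨p, hp, rfl⟩ := List.mem_map.mp hz
  show w * (p.1 * a * p.2) = 0
  rw [← mul_assoc, ← mul_assoc, AnnS_flip ι a hsp hQ hw p.1, zero_mul]

lemma Id_inter_Ann {q : Q} (hq : q ∈ IdS a) (hw : q ∈ AnnS a) : q = 0 := by
  apply qsemi hsp ι hQ
  intro v
  exact Id_mul_Ann a (IdS_mul_right a hq v) hw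

/-- Extension: if `s` kills `ι⁻¹(IdS)` on the right then it kills `IdS`. -/
lemma ext_IdR {s : R} (h : ∀ r : R, ι r ∈ IdS a → s * r = 0) :
    ∀ w ∈ IdS a, ι s * w = 0 := by
  intro w hw
  apply rnondeg hsp ι hQ _ _ (carr_dense ι hQ w)
  intro b hb
  obtain ⟨-, ⟨r, hr⟩⟩ := carr_spec ι hQ w b hb
  have hrA : ι r ∈ IdS a := hr ▸ IdS_mul_right a hw (ι b)
  have : s * r = 0 := h r hrA
  rw [mul_assoc, ← hr, ← map_mul, this, map_zero]

lemma ext_AnnR {s : R} (h : ∀ r : R, ι r ∈ AnnS a → s * r = 0) :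
    ∀ w ∈ AnnS a, ι s * w = 0 := by
  intro w hw
  apply rnondeg hsp ι hQ _ _ (carr_dense ι hQ w)
  intro b hb
  obtain ⟨-, ⟨r, hr⟩⟩ := carr_spec ι hQ w b hb
  have hrA : ι r ∈ AnnS a := hr ▸ AnnS_mul_right a hw (ι b)
  have : s * r = 0 := h r hrA
  rw [mul_assoc, ← hr, ← map_mul, this, map_zero]

lemma ext_IdL {s : R} (h : ∀ r : R, ι r ∈ IdS a → r * s = 0) :
    ∀ w ∈ IdS a, w * ι s = 0 := by
  intro w hw
  apply hQ.nondeg _ _ (carr_dense ι hQ w)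
  intro b hb
  obtain ⟨⟨r, hr⟩, -⟩ := carr_spec ι hQ w b hb
  have hrA : ι r ∈ IdS a := hr ▸ IdS_mul_left a hw (ι b)
  have : r * s = 0 := h r hrA
  rw [← mul_assoc, ← hr, ← map_mul, this, map_zero]

lemma ext_AnnL {s : R} (h : ∀ r : R, ι r ∈ AnnS a → r * s = 0) :
    ∀ w ∈ AnnS a, w * ι s = 0 := by
  intro w hw
  apply hQ.nondeg _ _ (carr_dense ι hQ w)
  intro b hb
  obtain ⟨⟨r, hr⟩, -⟩ := carr_spec ι hQ w b hb
  have hrA : ι r ∈ AnnS a := hr ▸ AnnS_mul_left a hw (ι b)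
  have : r * s = 0 := h r hrA
  rw [← mul_assoc, ← hr, ← map_mul, this, map_zero]

/-- Death on the right: an element annihilating `A` and `N` on the right is zero. -/
lemma deathR {s : R} (hA : ∀ r : R, ι r ∈ IdS a → s * r = 0)
    (hN : ∀ r : R, ι r ∈ AnnS a → s * r = 0) : s = 0 := by
  have h1 : ∀ w ∈ IdS a, ι s * w = 0 := ext_IdR ι a hsp hQ hA
  have hsAnn : ι s ∈ AnnS a := by
    apply AnnS_of_flip ι a hsp hQ
    intro v
    have : ι s * v * a = ι s * (v * a) := by rw [mul_assoc]
    rw [this]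
    exact h1 (v * a) ⟨[(v, 1)], by simp⟩
  have h2 : ∀ w ∈ AnnS a, ι s * w = 0 := ext_AnnR ι a hsp hQ hN
  have : ι s = 0 := by
    apply qsemi hsp ι hQ
    intro v
    rw [mul_assoc]
    exact h2 (v * ι s) (AnnS_mul_left a hsAnn v)
  exact hQ.inj (by rw [this, map_zero])

/-- Death on the left. -/
lemma deathL {s : R} (hA : ∀ r : R, ι r ∈ IdS a → r * s = 0)
    (hN : ∀ r : R, ι r ∈ AnnS a → r * s = 0) : s = 0 := by
  have h1 : ∀ w ∈ IdS a, w * ι s = 0 := ext_IdL ι a hsp hQ hA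
  have hsAnn : ι s ∈ AnnS a := by
    intro v
    exact h1 (a * v) ⟨[(1, v)], by simp [mul_assoc]⟩
  have h2 : ∀ w ∈ AnnS a, w * ι s = 0 := ext_AnnL ι a hsp hQ hN
  have : ι s = 0 := by
    apply qsemi hsp ι hQ
    exact fun v => h2 (ι s * v) (AnnS_mul_right a hsAnn v)
  exact hQ.inj (by rw [this, map_zero])

/-- The dense ideal `A + N` of `R`. -/
def Jsupp : Set R :=
  {r | ∃ p : R × R, ι p.1 ∈ IdS a ∧ ι p.2 ∈ AnnS a ∧ r = p.1 + p.2}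

lemma Jsupp_dense : IsDenseIdeal R (Jsupp ι a) := by
  refine ⟨⟨(0, 0), by simpa using IdS_zero a, by simpa using AnnS_zero a, by simp⟩,
    ?_, ?_, ?_, ?_, ?_⟩
  · rintro r ⟨⟨u, v⟩, hu, hv, rfl⟩ r' ⟨⟨u', v'⟩, hu', hv', rfl⟩
    refine ⟨(u + u', v + v'), ?_, ?_, by dsimp only; abel⟩
    · rw [map_add]; exact IdS_add a hu hu'
    · rw [map_add]; exact AnnS_add a hv hv'
  · rintro r ⟨⟨u, v⟩, hu, hv, rfl⟩
    refine ⟨(-u, -v), ?_, ?_, by abel⟩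
    · rw [map_neg]; exact IdS_neg a hu
    · rw [map_neg]; exact AnnS_neg a hv
  · rintro r ⟨⟨u, v⟩, hu, hv, rfl⟩ t
    constructor
    · refine ⟨(t * u, t * v), ?_, ?_, by rw [mul_add]⟩
      · rw [map_mul]; exact IdS_mul_left a hu (ι t)
      · rw [map_mul]; exact AnnS_mul_left a hv (ι t)
    · refine ⟨(u * t, v * t), ?_, ?_, by rw [add_mul]⟩
      · rw [map_mul]; exact IdS_mul_right a hu (ι t)
      · rw [map_mul]; exact AnnS_mul_right a hv (ι t)
  · intro t ht
    apply deathL ι a hsp hQ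
    · intro r hr
      exact ht r ⟨(r, 0), hr, by simpa using AnnS_zero a, by simp⟩
    · intro r hr
      exact ht r ⟨(0, r), by simpa using IdS_zero a, hr, by simp⟩
  · intro t ht
    apply deathR ι a hsp hQ
    · intro r hr
      exact ht r ⟨(r, 0), hr, by simpa using AnnS_zero a, by simp⟩
    · intro r hr
      exact ht r ⟨(0, r), by simpa using IdS_zero a, hr, by simp⟩

/-- The projection onto the `IdS`-component. -/
noncomputable def lamS : R → R := fun r =>
  if h : ∃ p : R × R, ι p.1 ∈ IdS a ∧ ι p.2 ∈ AnnS a ∧ r = p.1 + p.2 then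
    h.choose.1 else 0

lemma lamS_spec {u v : R} (hu : ι u ∈ IdS a) (hv : ι v ∈ AnnS a) :
    lamS ι a (u + v) = u := by
  have h : ∃ p : R × R, ι p.1 ∈ IdS a ∧ ι p.2 ∈ AnnS a ∧ u + v = p.1 + p.2 :=
    ⟨(u, v), hu, hv, rfl⟩
  rw [lamS, dif_pos h]
  obtain ⟨h1, h2, h3⟩ := h.choose_spec
  have hdiff : h.choose.1 - u = v - h.choose.2 :=
    sub_eq_sub_iff_add_eq_add.mpr (by rw [← h3, add_comm])
  have hz : ι (h.choose.1 - u) = 0 := by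
    apply Id_inter_Ann ι a hsp hQ
    · rw [map_sub]; exact IdS_sub a h1 hu
    · rw [hdiff, map_sub]; exact AnnS_sub a hv h2
  have h0 : h.choose.1 - u = 0 := by
    apply hQ.inj; rw [map_zero]; exact hz
  exact sub_eq_zero.mp h0

lemma lamS_specA {u : R} (hu : ι u ∈ IdS a) : lamS ι a u = u := by
  have h0 : ι (0 : R) ∈ AnnS a := by rw [map_zero]; exact AnnS_zero a
  have := lamS_spec ι a hsp hQ hu h0
  simpa using this

lemma lamS_specN {v : R} (hv : ι v ∈ AnnS a) : lamS ι a v = 0 := by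
  have h0 : ι (0 : R) ∈ IdS a := by rw [map_zero]; exact IdS_zero a
  have := lamS_spec ι a hsp hQ h0 hv
  have e1 : (0 : R) + v = v := by abel
  rw [e1] at this
  exact this

/-- Existence of the support idempotent. -/
lemma exists_support :
    ∃ e : Q, e ∈ BoolIdem Q ∧ e * a = a ∧
      (∀ w : Q, (∀ v : Q, a * v * w = 0) → e * w = 0 ∧ w * e = 0) := by
  have hJd := Jsupp_dense ι a hsp hQ
  have hA1 : ∀ r ∈ Jsupp ι a, ∀ r' ∈ Jsupp ι a,
      lamS ι a (r + r') = lamS ι a r + lamS ι a r' := by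
    rintro r ⟨p, hu, hv, rfl⟩ r' ⟨p', hu', hv', rfl⟩
    have e1 : p.1 + p.2 + (p'.1 + p'.2) = (p.1 + p'.1) + (p.2 + p'.2) := by abel
    rw [e1, lamS_spec ι a hsp hQ (by rw [map_add]; exact IdS_add a hu hu')
      (by rw [map_add]; exact AnnS_add a hv hv'),
      lamS_spec ι a hsp hQ hu hv, lamS_spec ι a hsp hQ hu' hv']
  have hM1 : ∀ r ∈ Jsupp ι a, ∀ t : R, lamS ι a (r * t) = lamS ι a r * t := by
    rintro r ⟨p, hu, hv, rfl⟩ t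
    have e1 : (p.1 + p.2) * t = p.1 * t + p.2 * t := by rw [add_mul]
    rw [e1, lamS_spec ι a hsp hQ (by rw [map_mul]; exact IdS_mul_right a hu (ι t))
      (by rw [map_mul]; exact AnnS_mul_right a hv (ι t)),
      lamS_spec ι a hsp hQ hu hv]
  have hM2 : ∀ r ∈ Jsupp ι a, ∀ t : R, lamS ι a (t * r) = t * lamS ι a r := by
    rintro r ⟨p, hu, hv, rfl⟩ t
    have e1 : t * (p.1 + p.2) = t * p.1 + t * p.2 := by rw [mul_add]
    rw [e1, lamS_spec ι a hsp hQ (by rw [map_mul]; exact IdS_mul_left a hu (ι t))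
      (by rw [map_mul]; exact AnnS_mul_left a hv (ι t)),
      lamS_spec ι a hsp hQ hu hv]
  have hCP : ∀ r ∈ Jsupp ι a, ∀ r' ∈ Jsupp ι a,
      r * lamS ι a r' = lamS ι a r * r' := by
    rintro r ⟨p, hu, hv, rfl⟩ r' ⟨p', hu', hv', rfl⟩
    rw [lamS_spec ι a hsp hQ hu hv, lamS_spec ι a hsp hQ hu' hv']
    have hvu' : p.2 * p'.1 = 0 := by
      apply hQ.inj
      rw [map_mul, map_zero]
      exact Ann_mul_Id ι a hsp hQ hv hu'
    have huv' : p.1 * p'.2 = 0 := by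
      apply hQ.inj
      rw [map_mul, map_zero]
      exact Id_mul_Ann a hu hv'
    have e2 : (p.1 + p.2) * p'.1 = p.1 * p'.1 + p.2 * p'.1 := by rw [add_mul]
    rw [e2, hvu']
    have e3 : p.1 * (p'.1 + p'.2) = p.1 * p'.1 + p.1 * p'.2 := by rw [mul_add]
    rw [e3, huv']
  obtain ⟨e, he⟩ := hQ.lifts (Jsupp ι a) hJd (lamS ι a) (lamS ι a) hA1 hA1 hM1 hM2 hCP
  -- basic action lemmas
  have P1L : ∀ q ∈ IdS a, e * q = q := by
    intro q hq
    have key : ∀ b ∈ carr ι hQ q, (e * q - q) * ι b = 0 := by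
      intro b hb
      obtain ⟨-, ⟨r, hr⟩⟩ := carr_spec ι hQ q b hb
      have hrA : ι r ∈ IdS a := hr ▸ IdS_mul_right a hq (ι b)
      have hrJ : r ∈ Jsupp ι a := ⟨(r, 0), hrA, by simpa using AnnS_zero a, by simp⟩
      have h4 := (he r hrJ).1
      rw [lamS_specA ι a hsp hQ hrA] at h4
      -- h4 : ι r = e * ι r
      rw [sub_mul, hr] at *
      rw [mul_assoc, ← hr, ← h4, hr, sub_self]
    have := rnondeg hsp ι hQ _ _ (carr_dense ι hQ q) key
    exact sub_eq_zero.mp this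
  have P1R : ∀ q ∈ IdS a, q * e = q := by
    intro q hq
    have key : ∀ b ∈ carr ι hQ q, ι b * (q * e - q) = 0 := by
      intro b hb
      obtain ⟨⟨r, hr⟩, -⟩ := carr_spec ι hQ q b hb
      have hrA : ι r ∈ IdS a := hr ▸ IdS_mul_left a hq (ι b)
      have hrJ : r ∈ Jsupp ι a := ⟨(r, 0), hrA, by simpa using AnnS_zero a, by simp⟩
      have h4 := (he r hrJ).2
      rw [lamS_specA ι a hsp hQ hrA] at h4
      -- h4 : ι r = ι r * e
      rw [mul_sub, ← mul_assoc, ← hr, ← h4, hr, sub_self]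
    have := hQ.nondeg _ _ (carr_dense ι hQ q) key
    exact sub_eq_zero.mp this
  have P2L : ∀ q ∈ AnnS a, e * q = 0 := by
    intro q hq
    have key : ∀ b ∈ carr ι hQ q, (e * q) * ι b = 0 := by
      intro b hb
      obtain ⟨-, ⟨r, hr⟩⟩ := carr_spec ι hQ q b hb
      have hrA : ι r ∈ AnnS a := hr ▸ AnnS_mul_right a hq (ι b)
      have hrJ : r ∈ Jsupp ι a := ⟨(0, r), by simpa using IdS_zero a, hrA, by simp⟩
      have h4 := (he r hrJ).1
      rw [lamS_specN ι a hsp hQ hrA, map_zero] at h4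
      rw [mul_assoc, ← hr, ← h4]
    exact rnondeg hsp ι hQ _ _ (carr_dense ι hQ q) key
  have P2R : ∀ q ∈ AnnS a, q * e = 0 := by
    intro q hq
    have key : ∀ b ∈ carr ι hQ q, ι b * (q * e) = 0 := by
      intro b hb
      obtain ⟨⟨r, hr⟩, -⟩ := carr_spec ι hQ q b hb
      have hrA : ι r ∈ AnnS a := hr ▸ AnnS_mul_left a hq (ι b)
      have hrJ : r ∈ Jsupp ι a := ⟨(0, r), by simpa using IdS_zero a, hrA, by simp⟩
      have h4 := (he r hrJ).2
      rw [lamS_specN ι a hsp hQ hrA, map_zero] at h4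
      rw [← mul_assoc, ← hr, ← h4]
    exact hQ.nondeg _ _ (carr_dense ι hQ q) key
  have P3 : e * e = e := by
    have key : ∀ j ∈ Jsupp ι a, ι j * (e * e - e) = 0 := by
      rintro j hj
      obtain ⟨p, hu, hv, rfl⟩ := hj
      have hj' : (p.1 + p.2) ∈ Jsupp ι a := ⟨p, hu, hv, rfl⟩
      have h4 := (he _ hj').2
      rw [lamS_spec ι a hsp hQ hu hv] at h4
      -- h4 : ι p.1 = ι (p.1+p.2) * e
      have h5 : ι p.1 * e = ι p.1 := P1R (ι p.1) hu
      rw [mul_sub, ← mul_assoc, ← h4, h5, sub_self]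
    have := hQ.nondeg _ _ hJd key
    exact sub_eq_zero.mp this
  have P4 : ∀ q : Q, e * q = q * e := by
    intro q
    have key : ∀ c ∈ carr ι hQ (e * q - q * e), ι c * (e * q - q * e) = 0 := by
      intro c hc
      obtain ⟨⟨m, hm⟩, -⟩ := carr_spec ι hQ (e * q - q * e) c hc
      -- ι m = ι c * (e*q - q*e)
      have hm0 : m = 0 := by
        apply deathR ι a hsp hQ
        · intro r hr
          apply (carr_dense ι hQ q).2.2.2.2.2
          intro c' hc'
          -- m * (r * c') = 0
          obtain ⟨-, ⟨r1, hr1⟩⟩ := carr_spec ι hQ q (r * c')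
            (((carr_dense ι hQ q).2.2.2.1 c' hc' r).1)
          -- hr1 : ι r1 = q * ι (r * c')
          have hr1A : ι r1 ∈ IdS a := by
            rw [hr1, map_mul]
            exact IdS_mul_left a (IdS_mul_right a hr (ι c')) q
          have hb1 : e * (q * ι (r * c')) = q * ι (r * c') := by
            rw [← hr1]; exact P1L (ι r1) hr1A
          have hb2 : e * ι (r * c') = ι (r * c') := by
            rw [map_mul, ← mul_assoc, P1L (ι r) hr]
          have hgoal : (e * q - q * e) * ι (r * c') = 0 := by
            rw [sub_mul, mul_assoc e q, hb1, mul_assoc q e, hb2, sub_self]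
          have : ι (m * (r * c')) = 0 := by
            rw [map_mul, hm, mul_assoc, hgoal, mul_zero]
          have hmrc : m * (r * c') = 0 := hQ.inj (by rw [this, map_zero])
          rw [← mul_assoc] at hmrc
          exact hmrc
        · intro r hr
          apply (carr_dense ι hQ q).2.2.2.2.2
          intro c' hc'
          obtain ⟨-, ⟨r1, hr1⟩⟩ := carr_spec ι hQ q (r * c')
            (((carr_dense ι hQ q).2.2.2.1 c' hc' r).1)
          have hr1A : ι r1 ∈ AnnS a := by
            rw [hr1, map_mul]
            exact AnnS_mul_left a (AnnS_mul_right a hr (ι c')) q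
          have hb1 : e * (q * ι (r * c')) = 0 := by
            rw [← hr1]; exact P2L (ι r1) hr1A
          have hb2 : e * ι (r * c') = 0 := by
            rw [map_mul, ← mul_assoc, P2L (ι r) hr, zero_mul]
          have hgoal : (e * q - q * e) * ι (r * c') = 0 := by
            rw [sub_mul, mul_assoc e q, hb1, mul_assoc q e, hb2, mul_zero, zero_sub, neg_zero]
          have : ι (m * (r * c')) = 0 := by
            rw [map_mul, hm, mul_assoc, hgoal, mul_zero]
          have hmrc : m * (r * c') = 0 := hQ.inj (by rw [this, map_zero])
          rw [← mul_assoc] at hmrc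
          exact hmrc
      rw [← hm, hm0, map_zero]
    have h0 := hQ.nondeg _ _ (carr_dense ι hQ (e * q - q * e)) key
    exact sub_eq_zero.mp h0
  refine ⟨e, ⟨Subring.mem_center_iff.mpr (fun g => (P4 g).symm), P3⟩,
    P1L a (a_mem_IdS a), ?_⟩
  intro w hw
  exact ⟨P2L w hw, P2R w hw⟩

end MartAux
end Supp

section OC
variable {R Q : Type*} [Ring R] [Ring Q]

namespace MartAux
set_option linter.unusedSectionVars false
set_option linter.unusedVariables false

variable (hsp : IsSemiprimeRing R) (ι : R →+* Q) (hQ : IsMartindaleQuotient ι)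

lemma range_sub_O : Set.range ι ⊆ OrthCompletion ι := by
  intro q hq
  rw [OrthCompletion, Set.mem_sInter]
  exact fun T hT => hT.1 hq

include hsp hQ in
lemma Ocomplete (E : Set Q) (hE : DenseOrth Q E) (x : Q → Q)
    (hx : ∀ e ∈ E, x e ∈ OrthCompletion ι) :
    ∃ s ∈ OrthCompletion ι, ∀ e ∈ E, e * s = e * x e := by
  obtain ⟨s, hs⟩ := Qorth hsp ι hQ x E hE
  refine ⟨s, ?_, hs⟩
  rw [OrthCompletion, Set.mem_sInter]
  rintro T ⟨hT1, hT2⟩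
  obtain ⟨s', hs'T, hs'⟩ := hT2 E hE x
    (fun e he => Set.mem_sInter.mp (hx e he) T ⟨hT1, hT2⟩)
  have h0 : s - s' = 0 := by
    apply hE.2.2
    intro e he
    rw [mul_sub, hs e he, hs' e he, sub_self]
  rw [sub_eq_zero.mp h0]
  exact hs'T

end MartAux
end OC

open MartAux in
theorem stmt13' {R Q : Type*} [Ring R] [Ring Q]
    (hsp : IsSemiprimeRing R)
    (ι : R →+* Q) (hQ : IsMartindaleQuotient ι)
    (M : Set Q) (hMB : M ⊆ BoolIdem Q)
    (hMadd : ∀ e ∈ M, ∀ f ∈ M, e + f - 2 * (e * f) ∈ M)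
    (hMmul : ∀ e ∈ M, ∀ f ∈ BoolIdem Q, e * f ∈ M)
    (hMproper : (1 : Q) ∉ M)
    (hMmax : ∀ e ∈ BoolIdem Q, e ∈ M ∨ 1 - e ∈ M) :
    ∀ x ∈ OrthCompletion ι, ∀ y ∈ OrthCompletion ι,
      (∀ z ∈ OrthCompletion ι, x * z * y ∈ OCIdeal ι M) →
      x ∈ OCIdeal ι M ∨ y ∈ OCIdeal ι M := by
  classical
  intro x hx y hy hxy
  by_contra hcon
  push_neg at hcon
  obtain ⟨hxn, hyn⟩ := hcon
  -- generalities about central idempotents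
  have hcomm : ∀ e ∈ BoolIdem Q, ∀ w : Q, e * w = w * e :=
    fun e he w => (Subring.mem_center_iff.mp he.1 w).symm
  have hBmul : ∀ e ∈ BoolIdem Q, ∀ f ∈ BoolIdem Q, e * f ∈ BoolIdem Q := by
    intro e he f hf
    refine ⟨Subring.mul_mem _ he.1 hf.1, ?_⟩
    rw [mul_assoc, ← mul_assoc f e f, ← hcomm e he f, mul_assoc e f f, hf.2,
      ← mul_assoc, he.2]
  have hBone : (1 : Q) ∈ BoolIdem Q := ⟨Subring.one_mem _, one_mul 1⟩
  have hB1sub : ∀ e ∈ BoolIdem Q, 1 - e ∈ BoolIdem Q := by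
    intro e he
    refine ⟨Subring.sub_mem _ (Subring.one_mem _) he.1, ?_⟩
    rw [sub_mul, one_mul, mul_sub, mul_one, he.2]
    abel
  have hM0 : (0 : Q) ∈ M := by
    rcases hMmax 1 hBone with h | h
    · exact absurd h hMproper
    · simpa using h
  -- joins in M
  have hjoin2 : ∀ e ∈ M, ∀ f ∈ M, e + f - e * f ∈ M := by
    intro e he f hf
    have heB := hMB he
    have hfB := hMB hf
    have h1 := hMadd e he f hf
    have h2 := hMmul e he f hfB
    have h3 := hMadd _ h1 _ h2
    have key1 : f * (e * f) = e * f := by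
      rw [← mul_assoc, ← hcomm e heB f, mul_assoc, hfB.2]
    have key0 : (e + f - 2 * (e * f)) * (e * f) = 0 := by
      rw [sub_mul, add_mul, key1]
      have k2 : e * (e * f) = e * f := by rw [← mul_assoc, heB.2]
      have k3 : 2 * (e * f) * (e * f) = 2 * (e * f) := by
        rw [mul_assoc, (hBmul e heB f hfB).2]
      rw [k2, k3, two_mul]
      abel
    have hexpr : e + f - 2 * (e * f) + e * f - 2 * ((e + f - 2 * (e * f)) * (e * f))
        = e + f - e * f := by
      rw [key0, mul_zero, sub_zero, two_mul]
      abel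
    rw [hexpr] at h3
    exact h3
  -- finite joins
  have hjoinFin : ∀ (k : ℕ) (g : Fin k → Q), (∀ i, g i ∈ M) →
      ∃ f ∈ M, ∀ i, g i * f = g i := by
    intro k
    induction k with
    | zero => exact fun g hg => ⟨0, hM0, fun i => i.elim0⟩
    | succ n ih =>
      intro g hg
      obtain ⟨f, hfM, hf⟩ := ih (g ∘ Fin.succ) (fun i => hg _)
      have hfB := hMB hfM
      have hg0B := hMB (hg 0)
      refine ⟨f + g 0 - f * (g 0), hjoin2 f hfM (g 0) (hg 0), ?_⟩
      intro i
      induction i using Fin.cases with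
      | zero =>
        rw [mul_sub, mul_add]
        have k1 : g 0 * (f * g 0) = g 0 * f := by
          rw [← mul_assoc, hcomm (g 0) hg0B f, mul_assoc, hg0B.2]
        rw [k1, hg0B.2]
        abel
      | succ j =>
        have hj := hf j
        rw [mul_sub, mul_add]
        have k1 : g j.succ * (f * g 0) = g j.succ * g 0 := by
          rw [← mul_assoc]
          show (g ∘ Fin.succ) j * f * g 0 = g j.succ * g 0
          rw [hj]
          rfl
        rw [k1]
        show (g ∘ Fin.succ) j * f + g j.succ * g 0 - g j.succ * g 0 = g j.succ
        rw [hj]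
        show g j.succ + g j.succ * g 0 - g j.succ * g 0 = g j.succ
        abel
  -- characterization of OCIdeal
  have hchar1 : ∀ u ∈ OCIdeal ι M, ∃ f ∈ M, u * f = u := by
    rintro u ⟨k, c, g, hcg, rfl⟩
    obtain ⟨f, hfM, hf⟩ := hjoinFin k g (fun i => (hcg i).2)
    refine ⟨f, hfM, ?_⟩
    rw [Finset.sum_mul]
    apply Finset.sum_congr rfl
    intro i _
    rw [mul_assoc, hf i]
  have hchar2 : ∀ u ∈ OrthCompletion ι, ∀ f ∈ M, u * f = u → u ∈ OCIdeal ι M := by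
    intro u hu f hf h
    refine ⟨1, fun _ => u, fun _ => f, fun i => ⟨hu, hf⟩, ?_⟩
    simp [h]
  -- supports
  choose Es hEs1 hEs2 hEs3 using fun q : Q => exists_support ι q hsp hQ
  have hkill : ∀ q : Q, ∀ g ∈ BoolIdem Q, g * q = 0 →
      Es q * g = 0 ∧ g * Es q = 0 := by
    intro q g hg h0
    apply hEs3
    intro v
    rw [← hcomm g hg (q * v), ← mul_assoc, h0, zero_mul]
  have hexM : Es x ∉ M := by
    intro hmem
    apply hxn
    apply hchar2 x hx (Es x) hmem
    rw [← hcomm (Es x) (hEs1 x) x]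
    exact hEs2 x
  have heyM : Es y ∉ M := by
    intro hmem
    apply hyn
    apply hchar2 y hy (Es y) hmem
    rw [← hcomm (Es y) (hEs1 y) y]
    exact hEs2 y
  have hMprime : ∀ e ∈ BoolIdem Q, ∀ f ∈ BoolIdem Q, e * f ∈ M → e ∈ M ∨ f ∈ M := by
    intro e heB f hfB hef
    by_contra hcon2
    push_neg at hcon2
    obtain ⟨he, hf⟩ := hcon2
    have h1 : 1 - e ∈ M := (hMmax e heB).resolve_left he
    have h2 : 1 - f ∈ M := (hMmax f hfB).resolve_left hf
    have h3 := hjoin2 _ h1 _ h2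
    have he3 : (1 - e) + (1 - f) - (1 - e) * (1 - f) = 1 - e * f := by
      rw [sub_mul, one_mul, mul_sub, mul_one]
      abel
    rw [he3] at h3
    have h4 := hjoin2 _ hef _ h3
    have he4 : e * f + (1 - e * f) - (e * f) * (1 - e * f) = 1 := by
      have k1 : (e * f) * (1 - e * f) = e * f - e * f := by
        rw [mul_sub, mul_one, (hBmul e heB f hfB).2]
      rw [k1, sub_self, sub_zero]
      abel
    rw [he4] at h4
    exact hMproper h4
  have hexey : Es x * Es y ∉ M := fun h =>
    (hMprime (Es x) (hEs1 x) (Es y) (hEs1 y) h).elim hexM heyM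
  -- the support condition
  set Csupp : Q → R → Prop :=
    fun e r => ∀ f ∈ BoolIdem Q, f * (e * (x * ι r * y)) = 0 → f * e = 0 with hCsupp
  set P' : Set Q := {e | e ∈ BoolIdem Q ∧ e ≠ 0 ∧ ∃ r : R, Csupp e r} with hP'
  -- Zorn 1 : maximal orthogonal subset of P'
  set S1 : Set (Set Q) :=
    {G | G ⊆ P' ∧ ∀ e ∈ G, ∀ f ∈ G, e ≠ f → e * f = 0} with hS1
  obtain ⟨G0, hG0⟩ : ∃ G0, Maximal (· ∈ S1) G0 := by
    apply zorn_subset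
    intro c hc hchain
    refine ⟨⋃₀ c, ⟨?_, ?_⟩, fun s hs => Set.subset_sUnion_of_mem hs⟩
    · rintro e ⟨G, hGc, heG⟩
      exact (hc hGc).1 heG
    · rintro e ⟨G, hGc, heG⟩ f ⟨G', hG'c, hfG'⟩ hne
      rcases hchain.total hGc hG'c with h | h
      · exact (hc hG'c).2 e (h heG) f hfG' hne
      · exact (hc hGc).2 e heG f (h hfG') hne
  have hG0S := hG0.1
  -- Zorn 2 : maximal orthogonal set of nonzero idempotents containing G0
  set S2 : Set (Set Q) :=
    {G | G0 ⊆ G ∧ G ⊆ {e | e ∈ BoolIdem Q ∧ e ≠ 0} ∧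
      ∀ e ∈ G, ∀ f ∈ G, e ≠ f → e * f = 0} with hS2
  obtain ⟨G1, hG1⟩ : ∃ G1, Maximal (· ∈ S2) G1 := by
    apply zorn_subset
    intro c hc hchain
    refine ⟨G0 ∪ ⋃₀ c, ⟨Set.subset_union_left, ?_, ?_⟩, fun s hs =>
      Set.subset_union_of_subset_right (Set.subset_sUnion_of_mem hs) _⟩
    · rintro e (heG0 | ⟨G, hGc, heG⟩)
      · obtain ⟨h1, h2, -⟩ := hG0S.1 heG0
        exact ⟨h1, h2⟩
      · exact (hc hGc).2.1 heG
    · have hmem : ∀ e, e ∈ G0 ∪ ⋃₀ c → ∀ f ∈ G0 ∪ ⋃₀ c, e ≠ f → e * f = 0 := by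
        rintro e he f hf hne
        rcases he with he | ⟨G, hGc, heG⟩
        · rcases hf with hf | ⟨G', hG'c, hfG'⟩
          · exact hG0S.2 e he f hf hne
          · exact (hc hG'c).2.2 e ((hc hG'c).1 he) f hfG' hne
        · rcases hf with hf | ⟨G', hG'c, hfG'⟩
          · exact (hc hGc).2.2 e heG f ((hc hGc).1 hf) hne
          · rcases hchain.total hGc hG'c with h | h
            · exact (hc hG'c).2.2 e (h heG) f hfG' hne
            · exact (hc hGc).2.2 e heG f (h hfG') hne
      exact hmem
  obtain ⟨hG1sub0, hG1B, hG1orth⟩ := hG1.1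
  have hG0subP : G0 ⊆ P' := hG0S.1
  -- G1 is a dense orthogonal set
  have hG1dense : DenseOrth Q G1 := by
    refine ⟨fun e he => (hG1B he).1, hG1orth, ?_⟩
    intro q hq
    by_contra hqne
    have heq : Es q ≠ 0 := by
      intro h0
      apply hqne
      have := hEs2 q
      rw [h0, zero_mul] at this
      exact this.symm
    have hkillall : ∀ e ∈ G1, e * Es q = 0 ∧ Es q * e = 0 := by
      intro e he
      have := hkill q e (hG1B he).1 (hq e he)
      exact ⟨this.2, this.1⟩
    have heqnG1 : Es q ∉ G1 := by
      intro hmem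
      have := (hkillall (Es q) hmem).1
      rw [(hEs1 q).2] at this
      exact heq this
    have hnew : insert (Es q) G1 ∈ S2 := by
      refine ⟨fun e he => Set.mem_insert_of_mem _ (hG1sub0 he), ?_, ?_⟩
      · rintro e (rfl | he)
        · exact ⟨hEs1 q, heq⟩
        · exact hG1B he
      · rintro e (rfl | he) f (rfl | hf) hne
        · exact absurd rfl hne
        · exact (hkillall f hf).2
        · exact (hkillall e he).1
        · exact hG1orth e he f hf hne
    have := hG1.2 hnew (Set.subset_insert _ _)
    exact heqnG1 (this (Set.mem_insert _ _))
  -- the family and its orthogonal sum in O(R)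
  set xfam : Q → Q := fun e => if h : ∃ r : R, Csupp e r then ι h.choose else 0
    with hxfam
  have hxfamO : ∀ e ∈ G1, xfam e ∈ OrthCompletion ι := by
    intro e he
    by_cases h : ∃ r : R, Csupp e r
    · have hh : xfam e = ι h.choose := dif_pos h
      rw [hh]
      exact range_sub_O ι ⟨_, rfl⟩
    · have hh : xfam e = 0 := dif_neg h
      rw [hh]
      have : (0 : Q) = ι 0 := by rw [map_zero]
      rw [this]
      exact range_sub_O ι ⟨_, rfl⟩
  obtain ⟨z, hzO, hz⟩ := Ocomplete hsp ι hQ G1 hG1dense xfam hxfamO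
  obtain ⟨f, hfM, hf⟩ := hchar1 _ (hxy z hzO)
  have hfB := hMB hfM
  have h1fB := hB1sub f hfB
  set g : Q := Es x * Es y * (1 - f) with hg
  have hgB : g ∈ BoolIdem Q := hBmul _ (hBmul _ (hEs1 x) _ (hEs1 y)) _ h1fB
  have hgne : g ≠ 0 := by
    intro h0
    apply hexey
    have h1 : Es x * Es y = Es x * Es y * f := by
      have h2 : Es x * Es y * (1 - f) = 0 := h0
      rw [mul_sub, mul_one] at h2
      exact sub_eq_zero.mp h2
    have h3 : Es x * Es y * f ∈ M := by
      rw [hcomm _ (hBmul _ (hEs1 x) _ (hEs1 y)) f]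
      exact hMmul f hfM _ (hBmul _ (hEs1 x) _ (hEs1 y))
    rw [h1]
    exact h3
  have hgxzy : g * (x * z * y) = 0 := by
    have h2 : (1 - f) * (x * z * y) = 0 := by
      rw [hcomm (1 - f) h1fB (x * z * y), mul_sub, mul_one, hf, sub_self]
    calc g * (x * z * y) = Es x * Es y * ((1 - f) * (x * z * y)) := by
          rw [hg, mul_assoc]
    _ = 0 := by rw [h2, mul_zero]
  -- swap helpers
  have hswap : ∀ e ∈ BoolIdem Q, ∀ u w : Q, e * (u * w) = u * (e * w) := by
    intro e he u w
    rw [hcomm e he (u * w), mul_assoc, ← hcomm e he w]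
  by_cases hcase : ∃ e₀ ∈ G0, g * e₀ ≠ 0
  · obtain ⟨e₀, he₀G, hge₀⟩ := hcase
    obtain ⟨he₀B, he₀ne, hr⟩ := hG0subP he₀G
    have hfam : xfam e₀ = ι hr.choose := dif_pos hr
    have hC : Csupp e₀ hr.choose := hr.choose_spec
    set r₀ : R := hr.choose with hr₀
    have he₀z : e₀ * z = e₀ * ι r₀ := by
      rw [hz e₀ (hG1sub0 he₀G), hfam]
    have hkey : g * (e₀ * (x * ι r₀ * y)) = 0 := by
      have c1 : e₀ * (x * ι r₀ * y) = x * (e₀ * ι r₀) * y := by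
        calc e₀ * (x * ι r₀ * y) = e₀ * (x * (ι r₀ * y)) := by rw [mul_assoc x]
        _ = x * (e₀ * (ι r₀ * y)) := hswap e₀ he₀B x (ι r₀ * y)
        _ = x * ((e₀ * ι r₀) * y) := by rw [← mul_assoc e₀]
        _ = x * (e₀ * ι r₀) * y := by rw [← mul_assoc x]
      have c2 : e₀ * (x * z * y) = x * (e₀ * z) * y := by
        calc e₀ * (x * z * y) = e₀ * (x * (z * y)) := by rw [mul_assoc x]
        _ = x * (e₀ * (z * y)) := hswap e₀ he₀B x (z * y)
        _ = x * ((e₀ * z) * y) := by rw [← mul_assoc e₀]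
        _ = x * (e₀ * z) * y := by rw [← mul_assoc x]
      rw [c1, ← he₀z, ← c2, hswap g hgB e₀ (x * z * y), hgxzy, mul_zero]
    have := hC g hgB hkey
    exact hge₀ this
  · push_neg at hcase
    -- Claim A: g x R y = 0
    have hclaimA : ∀ r : R, g * x * ι r * y = 0 := by
      by_contra hA
      push_neg at hA
      obtain ⟨r, hr0⟩ := hA
      set a1 : Q := g * x * ι r * y with ha1
      have hga1 : g * a1 = a1 := by
        rw [ha1, ← mul_assoc, ← mul_assoc, ← mul_assoc, hgB.2]
      set e' : Q := Es a1 * g with he'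
      have he'B : e' ∈ BoolIdem Q := hBmul _ (hEs1 a1) _ hgB
      have he'ne : e' ≠ 0 := by
        intro h0
        apply hr0
        calc a1 = Es a1 * a1 := (hEs2 a1).symm
        _ = Es a1 * (g * a1) := by rw [hga1]
        _ = (Es a1 * g) * a1 := by rw [← mul_assoc]
        _ = (0 : Q) * a1 := by rw [← he', h0]
        _ = 0 := zero_mul _
      have he'orth : ∀ e ∈ G0, e' * e = 0 ∧ e * e' = 0 := by
        intro e he
        have h1 : e' * e = 0 := by
          rw [he', mul_assoc, hcase e he, mul_zero]
        refine ⟨h1, ?_⟩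
        rw [← hcomm e' he'B e]
        exact h1
      have he'nG0 : e' ∉ G0 := by
        intro hmem
        apply he'ne
        have h2 : g * e' = 0 := hcase e' hmem
        have h3 : e' * e' = e' := he'B.2
        rw [← h3, he', mul_assoc (Es a1) g e', h2, mul_zero]
      have he'C : Csupp e' r := by
        intro f' hf'B hf'0
        have hxy1 : e' * (x * ι r * y) = a1 := by
          rw [he', mul_assoc, ha1]
          have : g * (x * ι r * y) = g * x * ι r * y := by
            rw [← mul_assoc, ← mul_assoc]
          rw [this, ← ha1, ← hga1]
          rw [hga1]
          exact hEs2 a1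
        rw [hxy1] at hf'0
        have := hkill a1 f' hf'B ?_
        · rw [he', ← mul_assoc, this.2, zero_mul]
        · -- f' * a1 = 0 needed: hf'0 : f' * a1 = 0
          exact hf'0
      have hnew : insert e' G0 ∈ S1 := by
        refine ⟨?_, ?_⟩
        · rintro e (rfl | he)
          · exact ⟨he'B, he'ne, r, he'C⟩
          · exact hG0subP he
        · rintro e (rfl | he) f'' (rfl | hf'') hne
          · exact absurd rfl hne
          · exact (he'orth f'' hf'').1
          · exact (he'orth e he).2
          · exact hG0S.2 e he f'' hf'' hne
      have := hG0.2 hnew (Set.subset_insert _ _)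
      exact he'nG0 (this (Set.mem_insert _ _))
    -- propagate to Q
    have hflip : ∀ r : R, y * ι r * (g * x) = 0 := by
      apply flipR hsp ι hQ (g * x) y
      intro r
      have : g * x * ι r * y = 0 := hclaimA r
      rw [← this]
    have hmid : ∀ v : Q, y * v * (g * x) = 0 := midQ hsp ι hQ y (g * x) hflip
    have h5 : Es y * (g * x) = 0 := (hEs3 y (g * x) hmid).1
    have h6 : g * Es y * x = 0 := by
      rw [← hcomm (Es y) (hEs1 y) g, mul_assoc]
      exact h5
    have h7 : Es x * (g * Es y) = 0 := by
      refine (hEs3 x (g * Es y) ?_).1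
      intro v
      have hgeyB : g * Es y ∈ BoolIdem Q := hBmul _ hgB _ (hEs1 y)
      rw [← hcomm _ hgeyB (x * v), ← mul_assoc, h6, zero_mul]
    have hfix : Es x * (g * Es y) = g := by
      rw [← hcomm (Es y) (hEs1 y) g, ← mul_assoc]
      -- (Es x * Es y) * g = g
      have hxyB := hBmul _ (hEs1 x) _ (hEs1 y)
      rw [hg, ← mul_assoc, hxyB.2]
    exact hgne (by rw [← hfix, h7])


/-- Let `R` be a semiprime ring, `Q` its Martindale quotient ring, `B` the Boolean ring
of idempotents of the extended centroid `C = Z(Q)`, and `M` a maximal ideal of `B`.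
Then `R_M = O(R)/O(R)M` is a prime ring, where `O(R)` is the orthogonal completion. -/
theorem stmt13 {R Q : Type*} [Ring R] [Ring Q]
    (hsp : IsSemiprimeRing R)
    (ι : R →+* Q) (hQ : IsMartindaleQuotient ι)
    (M : Set Q) (hMB : M ⊆ BoolIdem Q)
    (hMadd : ∀ e ∈ M, ∀ f ∈ M, e + f - 2 * (e * f) ∈ M)
    (hMmul : ∀ e ∈ M, ∀ f ∈ BoolIdem Q, e * f ∈ M)
    (hMproper : (1 : Q) ∉ M)
    (hMmax : ∀ e ∈ BoolIdem Q, e ∈ M ∨ 1 - e ∈ M) :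
    ∀ x ∈ OrthCompletion ι, ∀ y ∈ OrthCompletion ι,
      (∀ z ∈ OrthCompletion ι, x * z * y ∈ OCIdeal ι M) →
      x ∈ OCIdeal ι M ∨ y ∈ OCIdeal ι M :=
  stmt13' hsp ι hQ M hMB hMadd hMmul hMproper hMmax
end
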